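/- Let Ē, Ā, B̄ be n×n selective structural patterns. If the n×2n pattern [Ā^λ B̄] obtained by concatenating Ā^λ = Ā − λĒ and B̄ contains a ramp structure up to permutation, then (Ē, Ā, B̄) is selectively strongly structurally controllable (SSSC). -/

import Mathlib

inductive Pat : Type
  | zero : Pat
  | cross : Pat
  | any : Pat
deriving DecidableEq

/-- `X` is a realization of the selective structural pattern `Xbar`:
zero entries are zero, cross entries are nonzero, `any` entries are arbitrary. -/
def IsRealization {α β F : Type*} [Zero F]
    (Xbar : Matrix α β Pat) (X : Matrix α β F) : Prop :=
  ∀ i j, (Xbar i j = Pat.zero → X i j = 0) ∧ (Xbar i j = Pat.cross → X i j ≠ 0)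

/-- The complexification of a real matrix. -/
noncomputable def toC {α β : Type*} (X : Matrix α β ℝ) : Matrix α β ℂ :=
  X.map Complex.ofReal

/-- The pencil `A - λ E` is regular, i.e. `det (A - λ E)` is not identically zero. -/
def RegularPencil {n : ℕ} (E A : Matrix (Fin n) (Fin n) ℝ) : Prop :=
  ∃ μ : ℂ, (toC A - μ • toC E).det ≠ 0

/-- Selective strong structural controllability. -/
def SSSC {n : ℕ} {p : Type*} [Fintype p]
    (Ebar Abar : Matrix (Fin n) (Fin n) Pat) (Bbar : Matrix (Fin n) p Pat) : Prop :=
  ∀ (E A : Matrix (Fin n) (Fin n) ℝ) (B : Matrix (Fin n) p ℝ),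
    IsRealization Ebar E → IsRealization Abar A → RegularPencil E A →
    IsRealization Bbar B →
    ∀ lam : ℂ, (Matrix.fromCols (toC A - lam • toC E) (toC B)).rank = n

/-- Selective strong structural observability. -/
def SSSO {n : ℕ} {m : Type*} [Fintype m]
    (Ebar Abar : Matrix (Fin n) (Fin n) Pat) (Cbar : Matrix m (Fin n) Pat) : Prop :=
  ∀ (E A : Matrix (Fin n) (Fin n) ℝ) (C : Matrix m (Fin n) ℝ),
    IsRealization Ebar E → IsRealization Abar A → RegularPencil E A →
    IsRealization Cbar C →
    ∀ lam : ℂ, (Matrix.fromRows (toC A - lam • toC E) (toC C)).rank = n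

/-- A pattern with no `⊗` entries, i.e. a `{0,×}`-pattern. -/
def ZeroCross {α β : Type*} (X : Matrix α β Pat) : Prop :=
  ∀ i j, X i j ≠ Pat.any

/-- Number of `×` entries of a pattern. -/
def crossCount {α β : Type*} [Fintype α] [Fintype β] (X : Matrix α β Pat) : ℕ :=
  ∑ i, ∑ j, if X i j = Pat.cross then 1 else 0

/-- The pattern `Ā - λ Ē`. -/
def patLam {n : ℕ} (Ebar Abar : Matrix (Fin n) (Fin n) Pat) :
    Matrix (Fin n) (Fin n) Pat :=
  Matrix.of fun i j =>
    match Abar i j, Ebar i j with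
    | Pat.cross, Pat.zero => Pat.cross
    | Pat.zero, Pat.zero => Pat.zero
    | _, _ => Pat.any


/-!
A realization `M` of `[Ā^λ  B̄]` inherits the ramp: the `n × n` submatrix of `M` on the rows
`ρ i` and columns `c i` is lower triangular with nonzero diagonal, hence invertible, so
`rank M = n`. That this realization is indeed `[A - λE  B]` for every `λ ∈ ℂ` is read off entrywise:
an `×` entry of `Ā^λ` forces `E_ij = 0` and `A_ij ≠ 0`, a `0` entry forces both to vanish.
-/

theorem Matrix.rank_eq_of_ramp {K β : Type*} [CommRing K] [IsDomain K] [Fintype β] {n : ℕ}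
    (M : Matrix (Fin n) β K) (ρ : Fin n → Fin n) (c : Fin n → β)
    (hdiag : ∀ i, M (ρ i) (c i) ≠ 0) (hzero : ∀ i j, i < j → M (ρ i) (c j) = 0) :
    M.rank = n := by
  have hlower : (M.submatrix ρ c).IsLowerTriangular := fun i j hij => hzero i j hij
  have hdet : (M.submatrix ρ c).det ≠ 0 := by
    rw [Matrix.det_of_isLowerTriangular _ hlower]
    exact Finset.prod_ne_zero_iff.2 fun i _ => hdiag i
  apply le_antisymm
  · simpa using M.rank_le_card_height
  · calc n = (M.submatrix ρ c).rank := by rw [Matrix.rank_of_det_ne_zero hdet, Fintype.card_fin]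
      _ ≤ M.rank := M.rank_submatrix_le ρ c

namespace IsRealization

variable {α β γ : Type*}

theorem toC {Xbar : Matrix α β Pat} {X : Matrix α β ℝ} (h : IsRealization Xbar X) :
    IsRealization Xbar (toC X) := fun i j =>
  ⟨fun hij => by simp [_root_.toC, (h i j).1 hij],
   fun hij => by simpa [_root_.toC] using (h i j).2 hij⟩

theorem fromCols {F : Type*} [Zero F] {Xbar : Matrix α β Pat} {Ybar : Matrix α γ Pat}
    {X : Matrix α β F} {Y : Matrix α γ F} (hX : IsRealization Xbar X) (hY : IsRealization Ybar Y) :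
    IsRealization (Matrix.fromCols Xbar Ybar) (Matrix.fromCols X Y)
  | i, Sum.inl j => hX i j
  | i, Sum.inr j => hY i j

theorem rank_eq_of_ramp {K : Type*} [CommRing K] [IsDomain K] [Fintype β] {n : ℕ}
    {Xbar : Matrix (Fin n) β Pat} {M : Matrix (Fin n) β K} (h : IsRealization Xbar M)
    (ρ : Fin n → Fin n) (c : Fin n → β) (hdiag : ∀ i, Xbar (ρ i) (c i) = Pat.cross)
    (hzero : ∀ i j, i < j → Xbar (ρ i) (c j) = Pat.zero) :
    M.rank = n :=
  M.rank_eq_of_ramp ρ c (fun i => (h _ _).2 (hdiag i)) fun i j hij => (h _ _).1 (hzero i j hij)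

end IsRealization

theorem isRealization_patLam {K : Type*} [Ring K] {n : ℕ}
    {Ebar Abar : Matrix (Fin n) (Fin n) Pat} {E A : Matrix (Fin n) (Fin n) K}
    (hE : IsRealization Ebar E) (hA : IsRealization Abar A) (lam : K) :
    IsRealization (patLam Ebar Abar) (A - lam • E) := by
  intro i j
  constructor <;> intro hij <;>
    cases hAij : Abar i j <;> cases hEij : Ebar i j <;>
    simp_all [patLam, (hA i j).1, (hA i j).2, (hE i j).1]

theorem ramp_implies_SSSC_general {n : ℕ}
    (Ebar Abar Bbar : Matrix (Fin n) (Fin n) Pat)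
    (ρ : Equiv.Perm (Fin n)) (c : Fin n → Fin n ⊕ Fin n)
    (hdiag : ∀ i, Matrix.fromCols (patLam Ebar Abar) Bbar (ρ i) (c i) = Pat.cross)
    (hzero : ∀ i j : Fin n, i < j →
      Matrix.fromCols (patLam Ebar Abar) Bbar (ρ i) (c j) = Pat.zero) :
    SSSC Ebar Abar Bbar := by
  intro E A B hE hA _ hB lam
  have hM := (isRealization_patLam hE.toC hA.toC lam).fromCols hB.toC
  exact hM.rank_eq_of_ramp ρ c hdiag hzero

/-- if the concatenated pattern `[Ā^λ  B̄]` contains a ramp structure up to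
permutation, then `(Ē, Ā, B̄)` is selectively strongly structurally controllable. -/
theorem ramp_implies_SSSC {n : ℕ}
    (Ebar Abar Bbar : Matrix (Fin n) (Fin n) Pat)
    (ρ : Equiv.Perm (Fin n)) (c : Fin n → Fin n ⊕ Fin n) (hc : Function.Injective c)
    (hdiag : ∀ i, Matrix.fromCols (patLam Ebar Abar) Bbar (ρ i) (c i) = Pat.cross)
    (hzero : ∀ i j : Fin n, i < j →
      Matrix.fromCols (patLam Ebar Abar) Bbar (ρ i) (c j) = Pat.zero) :
    SSSC Ebar Abar Bbar :=
  ramp_implies_SSSC_general Ebar Abar Bbar ρ c hdiag hzero
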